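/- Let V_1, ..., V_n be n ≥ 2 distributions on ℝ and let α ≥ 0. For p = (p_1,...,p_n) in the open simplex Δ = {p ∈ (0,1)^n : Σ p_i = 1}, write V_p = Σ_{i=1}^n p_i V_i. The following are equivalent: (a) V_p ∈ S(α) for every p ∈ Δ; (b) V_p ∈ S(α) for some p ∈ Δ and, for every y ∈ ℝ and every i = 1,...,n, V̄_i(x−y) − e^{αy} V̄_i(x) = o(Σ_{j=1}^n V̄_j(x)) as x → ∞. -/

import Mathlib

open MeasureTheory ProbabilityTheory Filter Asymptotics

noncomputable section

/-- The tail function `Ū(x) = U((x,∞))` of a measure on `ℝ`. -/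
def tailDist (μ : Measure ℝ) (x : ℝ) : ℝ := (μ (Set.Ioi x)).toReal

/-- Convolution of two measures on `ℝ`. -/
def convDist (μ ν : Measure ℝ) : Measure ℝ := (μ.prod ν).map (fun p => p.1 + p.2)

/-- The distribution with CDF `V(x)𝟙_{x ≥ 0}`, i.e. the pushforward under `x ↦ max x 0`. -/
def posMod (μ : Measure ℝ) : Measure ℝ := μ.map (fun x => max x 0)

/-- `V̂(α) = ∫ e^{αx} V(dx)`. -/
def mgfVal (μ : Measure ℝ) (α : ℝ) : ℝ := ∫ x, Real.exp (α * x) ∂μ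

/-- The convolution-equivalence class `S(α)`: a distribution `V` on `ℝ` is in `S(α)` if
the distribution with CDF `V(x)𝟙_{x ≥ 0}` has everywhere positive tail,
`V̄(x-y)/V̄(x) → e^{αy}` for all `y`, `V̂(α) = ∫ e^{αx} V(dx) < ∞`, and
`\overline{V^{2*}}(x)/V̄(x) → 2V̂(α)`. -/
def MemCE (α : ℝ) (V : Measure ℝ) : Prop :=
  (∀ x : ℝ, 0 < tailDist (posMod V) x) ∧
  (∀ y : ℝ, Tendsto (fun x => tailDist (posMod V) (x - y) / tailDist (posMod V) x)
      atTop (nhds (Real.exp (α * y)))) ∧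
  Integrable (fun x => Real.exp (α * x)) (posMod V) ∧
  Tendsto (fun x => tailDist (convDist (posMod V) (posMod V)) x / tailDist (posMod V) x)
      atTop (nhds (2 * mgfVal (posMod V) α))

/-- Strongly regular variation `R*_{-α}`: the distribution `V` with tail
`V̄(x) = Ū(eˣ)/Ū(0)` (i.e. the conditional law of `ln ξ` given `ξ > 0`, where `ξ ∼ U`)
belongs to `S(α)`. -/
def MemSRV (α : ℝ) (U : Measure ℝ) : Prop :=
  U (Set.Ioi 0) ≠ 0 ∧
  MemCE α (((U (Set.Ioi 0))⁻¹ • U.restrict (Set.Ioi 0)).map Real.log)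

/-- Regular variation `R_{-α}`: `Ū(x) > 0` for all `x` and `Ū(xy)/Ū(x) → y^{-α}` for `y > 0`. -/
def MemRV (α : ℝ) (U : Measure ℝ) : Prop :=
  (∀ x : ℝ, 0 < tailDist U x) ∧
  ∀ y : ℝ, 0 < y →
    Tendsto (fun x => tailDist U (x * y) / tailDist U x) atTop (nhds (y ^ (-α)))

/-- Assumption A: every convex combination `pF + (1-p)G`, `0 < p < 1`,
is of strongly regular variation with index `-α`. -/
def AssumpA (α : ℝ) (F G : Measure ℝ) : Prop :=
  ∀ p : ℝ, 0 < p → p < 1 →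
    MemSRV α (ENNReal.ofReal p • F + ENNReal.ofReal (1 - p) • G)

end

/-! The tail of a mixture is `V̄_p = Σ pᵢ V̄ᵢ`, so mixtures with positive weights dominate one
another and their tails are comparable with `Σ V̄ⱼ`.

(a) ⇒ (b): long-tailedness of `V_p` says that `V̄_p(x - y) - e^{αy} V̄_p(x) = o(Σ V̄ⱼ)`, and this
defect is linear in `p`; the defect of `V̄ᵢ` is twice that of the midpoint of the barycentre and
the vertex `i`, minus that of the barycentre.

(b) ⇒ (a): the insensitivity relation makes every `V_p` long-tailed. For a long-tailed `V` with
`V̂(α) < ∞`, splitting `X + Y > x` according to whether `min(X, Y) ≤ A` gives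
`\overline{V^{2*}}(x) / V̄(x) → 2 V̂(α)` exactly when `P(X + Y > x, min(X, Y) > A) = o(V̄(x))` as
`A → ∞`, and this remainder of one mixture is bounded by a constant times that of another. -/

open Set Real
open scoped ENNReal Topology

section Tail

variable {μ ν : Measure ℝ}

lemma tailDist_nonneg (x : ℝ) : 0 ≤ tailDist μ x := ENNReal.toReal_nonneg

lemma tailDist_antitone [IsFiniteMeasure μ] : Antitone (tailDist μ) :=
  fun _ _ hab => ENNReal.toReal_mono (measure_ne_top _ _) (measure_mono (Ioi_subset_Ioi hab))

lemma measurable_tailDist [IsFiniteMeasure μ] : Measurable (tailDist μ) :=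
  tailDist_antitone.measurable

lemma measurable_tailDist_sub [IsFiniteMeasure μ] (x : ℝ) :
    Measurable fun t => tailDist μ (x - t) :=
  measurable_tailDist.comp (measurable_const.sub measurable_id)

lemma tailDist_le_measureReal_univ [IsFiniteMeasure μ] (x : ℝ) : tailDist μ x ≤ μ.real univ :=
  measureReal_mono (subset_univ _)

lemma tailDist_le_of_le_smul [IsFiniteMeasure ν] {C : ℝ≥0∞} (hC : C ≠ ∞) (h : μ ≤ C • ν)
    (x : ℝ) : tailDist μ x ≤ C.toReal * tailDist ν x := by
  rw [tailDist, tailDist, ← ENNReal.toReal_mul]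
  exact ENNReal.toReal_mono (ENNReal.mul_ne_top hC (measure_ne_top _ _)) (h _)

lemma tailDist_pos_of_le_smul [IsFiniteMeasure μ] {C : ℝ≥0∞} (hC : C ≠ ∞) (h : ν ≤ C • μ)
    {x : ℝ} (hν : 0 < tailDist ν x) : 0 < tailDist μ x :=
  pos_of_mul_pos_right (hν.trans_le (tailDist_le_of_le_smul hC h x)) ENNReal.toReal_nonneg

lemma posMod_apply_Ioi (μ : Measure ℝ) {x : ℝ} (hx : 0 ≤ x) : posMod μ (Ioi x) = μ (Ioi x) := by
  rw [posMod, Measure.map_apply (by fun_prop) measurableSet_Ioi]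
  congr 1
  ext t
  simp [hx.not_gt]

lemma tailDist_posMod (μ : Measure ℝ) {x : ℝ} (hx : 0 ≤ x) :
    tailDist (posMod μ) x = tailDist μ x := by
  rw [tailDist, tailDist, posMod_apply_Ioi μ hx]

instance [IsFiniteMeasure μ] : IsFiniteMeasure (posMod μ) := by
  unfold posMod; infer_instance

lemma posMod_le_smul {C : ℝ≥0∞} (h : μ ≤ C • ν) : posMod μ ≤ C • posMod ν := by
  unfold posMod
  rw [← Measure.map_smul]
  exact Measure.map_mono h (by fun_prop)

end Tail

section Convolution

lemma convDist_apply_Ioi (μ : Measure ℝ) [SFinite μ] (x : ℝ) :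
    convDist μ μ (Ioi x) =
      2 * ∫⁻ a in Iic (x / 2), μ (Ioi (x - a)) ∂μ + μ (Ioi (x / 2)) ^ 2 := by
  set E₁ : Set (ℝ × ℝ) := {p | p.1 ≤ x / 2 ∧ x < p.1 + p.2}
  set E₃ : Set (ℝ × ℝ) := Ioi (x / 2) ×ˢ Ioi (x / 2)
  have hE₁ : MeasurableSet E₁ :=
    (measurable_fst measurableSet_Iic).inter
      (measurableSet_lt measurable_const (measurable_fst.add measurable_snd))
  have hE₂ : MeasurableSet (Prod.swap ⁻¹' E₁) := measurable_swap hE₁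
  -- a sum exceeding `x` has a summand `≤ x/2` (at most one of them), or both exceed `x/2`
  have hsplit : (fun p : ℝ × ℝ => p.1 + p.2) ⁻¹' Ioi x = E₁ ∪ (Prod.swap ⁻¹' E₁ ∪ E₃) := by
    ext ⟨a, b⟩
    simp only [E₁, E₃, mem_preimage, mem_Ioi, mem_union, mem_ofPred_eq, Prod.fst_swap,
      Prod.snd_swap, mem_prod]
    constructor
    · intro h
      by_cases ha : a ≤ x / 2
      · exact Or.inl ⟨ha, h⟩
      by_cases hb : b ≤ x / 2
      · exact Or.inr (Or.inl ⟨hb, by linarith⟩)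
      exact Or.inr (Or.inr ⟨not_le.1 ha, not_le.1 hb⟩)
    · rintro (⟨-, h⟩ | ⟨-, h⟩ | ⟨ha, hb⟩) <;> linarith
  have hdisj₁ : Disjoint E₁ (Prod.swap ⁻¹' E₁ ∪ E₃) := by
    refine disjoint_left.2 fun ⟨a, b⟩ ⟨ha, h⟩ h' => ?_
    rcases h' with ⟨hb, -⟩ | ⟨ha', -⟩
    · simp only [Prod.fst_swap] at hb; linarith
    · exact (not_lt.2 ha) ha'
  have hdisj₂ : Disjoint (Prod.swap ⁻¹' E₁) E₃ :=
    disjoint_left.2 fun ⟨a, b⟩ ⟨hb, _⟩ ⟨_, hb'⟩ => (not_lt.2 hb) hb'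
  have hslice : (μ.prod μ) E₁ = ∫⁻ a in Iic (x / 2), μ (Ioi (x - a)) ∂μ := by
    rw [Measure.prod_apply hE₁, ← lintegral_indicator measurableSet_Iic]
    refine lintegral_congr fun a => ?_
    by_cases ha : a ≤ x / 2
    · rw [indicator_of_mem (mem_Iic.2 ha)]
      congr 1
      ext b
      simp [E₁, ha, sub_lt_iff_lt_add']
    · rw [indicator_of_notMem (fun h => ha (mem_Iic.1 h))]
      simp [E₁, ha]
  rw [convDist, Measure.map_apply (by fun_prop) measurableSet_Ioi, hsplit,
    measure_union hdisj₁ (hE₂.union (measurableSet_Ioi.prod measurableSet_Ioi)),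
    measure_union hdisj₂ (measurableSet_Ioi.prod measurableSet_Ioi),
    Measure.measurePreserving_swap.measure_preimage hE₁.nullMeasurableSet, Measure.prod_prod,
    hslice]
  ring

variable {μ : Measure ℝ}

lemma integrableOn_tailDist_sub [IsFiniteMeasure μ] (ρ : Measure ℝ) [IsFiniteMeasure ρ]
    (x : ℝ) (s : Set ℝ) : IntegrableOn (fun t => tailDist μ (x - t)) s ρ :=
  Integrable.of_bound (measurable_tailDist_sub x).aestronglyMeasurable (μ.real univ)
    (ae_of_all _ fun t => by
      rw [Real.norm_of_nonneg (tailDist_nonneg _)]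
      exact tailDist_le_measureReal_univ _)

lemma tailDist_convDist [IsFiniteMeasure μ] (x : ℝ) :
    tailDist (convDist μ μ) x =
      2 * ∫ a in Iic (x / 2), tailDist μ (x - a) ∂μ + tailDist μ (x / 2) ^ 2 := by
  have hfin : ∫⁻ a in Iic (x / 2), μ (Ioi (x - a)) ∂μ ≠ ∞ := by
    refine ne_top_of_le_ne_top ?_ (lintegral_mono fun a => measure_mono (subset_univ _))
    rw [setLIntegral_const]
    finiteness
  rw [tailDist, convDist_apply_Ioi, ENNReal.toReal_add (by finiteness) (by finiteness),
    ENNReal.toReal_mul, ENNReal.toReal_pow, ← integral_toReal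
      (Monotone.measurable fun _ _ h => measure_mono (Ioi_subset_Ioi (by linarith))).aemeasurable
      (ae_of_all _ fun _ => measure_lt_top _ _)]
  rfl

/-- For `A ≤ x / 2` and independent `X, Y ∼ μ`, this is
`P(X + Y > x, min(X, Y) > A) / P(X > x)`. -/
noncomputable def convRemainder (μ : Measure ℝ) (A x : ℝ) : ℝ :=
  (2 * ∫ t in Ioc A (x / 2), tailDist μ (x - t) ∂μ + tailDist μ (x / 2) ^ 2) / tailDist μ x

lemma setIntegral_tailDist_sub_nonneg (ρ : Measure ℝ) (x : ℝ) (s : Set ℝ) :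
    0 ≤ ∫ t in s, tailDist μ (x - t) ∂ρ :=
  integral_nonneg fun _ => tailDist_nonneg _

lemma convRemainder_nonneg (A x : ℝ) : 0 ≤ convRemainder μ A x := by
  have := setIntegral_tailDist_sub_nonneg (μ := μ) μ x (Ioc A (x / 2))
  have := tailDist_nonneg (μ := μ) x
  unfold convRemainder
  positivity

lemma tailDist_convDist_div [IsFiniteMeasure μ] {A x : ℝ} (hA : A ≤ x / 2) :
    tailDist (convDist μ μ) x / tailDist μ x =
      2 * ((∫ t in Iic A, tailDist μ (x - t) ∂μ) / tailDist μ x) + convRemainder μ A x := by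
  rw [convRemainder, tailDist_convDist, ← Iic_union_Ioc_eq_Iic hA,
    setIntegral_union (Iic_disjoint_Ioc le_rfl) measurableSet_Ioc
      (integrableOn_tailDist_sub μ x _) (integrableOn_tailDist_sub μ x _)]
  ring

lemma tendsto_setIntegral_tailDist_div [IsFiniteMeasure μ] {α : ℝ}
    (hL : ∀ y, Tendsto (fun x => tailDist μ (x - y) / tailDist μ x) atTop (𝓝 (rexp (α * y))))
    (ρ : Measure ℝ) [IsFiniteMeasure ρ] (A : ℝ) :
    Tendsto (fun x => (∫ t in Iic A, tailDist μ (x - t) ∂ρ) / tailDist μ x) atTop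
      (𝓝 (∫ t in Iic A, rexp (α * t) ∂ρ)) := by
  simp_rw [← integral_div]
  have hbound : ∀ᶠ x in atTop, tailDist μ (x - A) / tailDist μ x ≤ rexp (α * A) + 1 :=
    (hL A).eventually (eventually_le_nhds (lt_add_one _))
  refine tendsto_integral_filter_of_dominated_convergence (fun _ => rexp (α * A) + 1)
    (.of_forall fun x => ((measurable_tailDist_sub x).div_const _).aestronglyMeasurable) ?_
    (integrable_const _) (ae_of_all _ hL)
  filter_upwards [hbound] with x hx
  refine ae_restrict_of_forall_mem measurableSet_Iic fun t (ht : t ≤ A) => ?_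
  rw [Real.norm_of_nonneg (div_nonneg (tailDist_nonneg _) (tailDist_nonneg _))]
  exact le_trans (div_le_div_of_nonneg_right (tailDist_antitone (by linarith))
    (tailDist_nonneg _)) hx

lemma tendsto_setIntegral_Iic_exp {ρ : Measure ℝ} {α : ℝ}
    (hint : Integrable (fun x => rexp (α * x)) ρ) :
    Tendsto (fun A => ∫ t in Iic A, rexp (α * t) ∂ρ) atTop (𝓝 (mgfVal ρ α)) := by
  have h := tendsto_setIntegral_of_monotone (s := fun A : ℝ => Iic A) (fun _ => measurableSet_Iic)
    (fun _ _ hab => Iic_subset_Iic.2 hab) (by rw [iUnion_Iic]; exact hint.integrableOn)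
  rwa [iUnion_Iic, setIntegral_univ] at h

lemma tendsto_tailDist_convDist_div_iff [IsFiniteMeasure μ] {α : ℝ}
    (hL : ∀ y, Tendsto (fun x => tailDist μ (x - y) / tailDist μ x) atTop (𝓝 (rexp (α * y))))
    (hint : Integrable (fun x => rexp (α * x)) μ) :
    Tendsto (fun x => tailDist (convDist μ μ) x / tailDist μ x) atTop (𝓝 (2 * mgfVal μ α)) ↔
      ∀ ε > 0, ∀ᶠ A in atTop, ∀ᶠ x in atTop, convRemainder μ A x ≤ ε := by
  have hJ := tendsto_setIntegral_tailDist_div hL μ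
  have hI := tendsto_setIntegral_Iic_exp hint
  have hsplit (A : ℝ) : ∀ᶠ x in atTop, tailDist (convDist μ μ) x / tailDist μ x =
      2 * ((∫ t in Iic A, tailDist μ (x - t) ∂μ) / tailDist μ x) + convRemainder μ A x :=
    (eventually_ge_atTop (2 * A)).mono fun x hx => tailDist_convDist_div (by linarith)
  constructor
  · intro h ε hε
    have hε6 : 0 < ε / 6 := by positivity
    filter_upwards [hI.eventually (eventually_abs_sub_lt _ hε6)] with A hA
    filter_upwards [hsplit A, (hJ A).eventually (eventually_abs_sub_lt _ hε6),
      h.eventually (eventually_abs_sub_lt _ (by positivity : 0 < ε / 3))] with x hx hxJ hxc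
    rw [abs_lt] at hA hxJ hxc
    linarith
  · intro h
    rw [Metric.tendsto_nhds]
    intro ε hε
    have hε6 : 0 < ε / 6 := by positivity
    obtain ⟨A, hA, hRA⟩ := ((hI.eventually (eventually_abs_sub_lt _ hε6)).and (h _ hε6)).exists
    filter_upwards [hsplit A, (hJ A).eventually (eventually_abs_sub_lt _ hε6), hRA]
      with x hx hxJ hxR
    have := convRemainder_nonneg (μ := μ) A x
    rw [abs_lt] at hA hxJ
    rw [Real.dist_eq, abs_lt]
    constructor <;> linarith

lemma setIntegral_le_of_le_smul {ν : Measure ℝ} {C : ℝ≥0∞} (hC : C ≠ ∞) (h : μ ≤ C • ν)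
    {f : ℝ → ℝ} (hf : 0 ≤ f) (hfi : Integrable f ν) (s : Set ℝ) :
    ∫ t in s, f t ∂μ ≤ C.toReal * ∫ t in s, f t ∂ν := by
  rw [← smul_eq_mul, ← integral_smul_measure, ← Measure.restrict_smul]
  exact integral_mono_measure (Measure.restrict_mono subset_rfl h) (ae_of_all _ fun t => hf t)
    ((hfi.smul_measure hC).restrict)

lemma convRemainder_le_of_le_smul {ν : Measure ℝ} [IsFiniteMeasure μ] [IsFiniteMeasure ν]
    {C C' : ℝ≥0∞} (hC : C ≠ ∞) (hC' : C' ≠ ∞) (hμν : μ ≤ C • ν) (hνμ : ν ≤ C' • μ)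
    (hν : ∀ x, 0 < tailDist ν x) (A x : ℝ) :
    convRemainder μ A x ≤ C.toReal ^ 2 * C'.toReal * convRemainder ν A x := by
  set K := C.toReal
  have hνx : tailDist ν x ≤ C'.toReal * tailDist μ x := tailDist_le_of_le_smul hC' hνμ x
  have hmid : ∫ t in Ioc A (x / 2), tailDist μ (x - t) ∂μ ≤
      K ^ 2 * ∫ t in Ioc A (x / 2), tailDist ν (x - t) ∂ν := calc
    _ ≤ ∫ t in Ioc A (x / 2), K * tailDist ν (x - t) ∂μ :=
      setIntegral_mono (integrableOn_tailDist_sub μ x _)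
        ((integrableOn_tailDist_sub μ x _).const_mul K) fun t => tailDist_le_of_le_smul hC hμν _
    _ ≤ K * (K * ∫ t in Ioc A (x / 2), tailDist ν (x - t) ∂ν) := by
      rw [integral_const_mul]
      gcongr
      exact setIntegral_le_of_le_smul hC hμν (fun t => tailDist_nonneg _)
        (integrableOn_univ.1 (integrableOn_tailDist_sub ν x _)) _
    _ = _ := by ring
  have hhalf : tailDist μ (x / 2) ^ 2 ≤ K ^ 2 * tailDist ν (x / 2) ^ 2 := by
    rw [← mul_pow]
    exact pow_le_pow_left₀ (tailDist_nonneg _) (tailDist_le_of_le_smul hC hμν _) 2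
  have hK' : 0 < C'.toReal := pos_of_mul_pos_left ((hν x).trans_le hνx) (tailDist_nonneg _)
  have hNν : 0 ≤ 2 * ∫ t in Ioc A (x / 2), tailDist ν (x - t) ∂ν + tailDist ν (x / 2) ^ 2 := by
    have := setIntegral_tailDist_sub_nonneg (μ := ν) ν x (Ioc A (x / 2))
    positivity
  calc convRemainder μ A x
      ≤ K ^ 2 * (2 * ∫ t in Ioc A (x / 2), tailDist ν (x - t) ∂ν + tailDist ν (x / 2) ^ 2) /
          tailDist μ x := by
        rw [convRemainder]
        exact div_le_div_of_nonneg_right (by linarith) (tailDist_nonneg _)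
    _ ≤ K ^ 2 * (2 * ∫ t in Ioc A (x / 2), tailDist ν (x - t) ∂ν + tailDist ν (x / 2) ^ 2) /
          (tailDist ν x / C'.toReal) := by
        gcongr
        · exact div_pos (hν x) hK'
        · rwa [div_le_iff₀' hK']
    _ = _ := by
      rw [convRemainder]
      field_simp

end Convolution

theorem MemCE.of_le_smul {μ ν : Measure ℝ} [IsFiniteMeasure μ] [IsFiniteMeasure ν] {α : ℝ}
    {C C' : ℝ≥0∞} (hC : C ≠ ∞) (hC' : C' ≠ ∞) (hμν : μ ≤ C • ν) (hνμ : ν ≤ C' • μ)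
    (hν : MemCE α ν)
    (hL : ∀ y, Tendsto (fun x => tailDist (posMod μ) (x - y) / tailDist (posMod μ) x) atTop
      (𝓝 (rexp (α * y)))) :
    MemCE α μ := by
  obtain ⟨hpos, hLν, hint, hconv⟩ := hν
  have hμν' := posMod_le_smul hμν
  have hνμ' := posMod_le_smul hνμ
  have hint' := (hint.smul_measure hC).mono_measure hμν'
  refine ⟨fun x => tailDist_pos_of_le_smul hC' hνμ' (hpos x), hL, hint',
    (tendsto_tailDist_convDist_div_iff hL hint').2 fun ε hε => ?_⟩
  set B := C.toReal ^ 2 * C'.toReal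
  have hB : 0 ≤ B := by positivity
  filter_upwards [(tendsto_tailDist_convDist_div_iff hLν hint).1 hconv (ε / (B + 1))
    (by positivity)] with A hA
  filter_upwards [hA] with x hx
  calc convRemainder (posMod μ) A x ≤ B * convRemainder (posMod ν) A x :=
        convRemainder_le_of_le_smul hC hC' hμν' hνμ' hpos A x
    _ ≤ B * (ε / (B + 1)) := by gcongr
    _ ≤ ε := by
        rw [← mul_div_assoc, div_le_iff₀ (by positivity)]
        nlinarith

lemma tendsto_div_iff_isLittleO_sub_mul {β : Type*} {l : Filter β} {f g : β → ℝ}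
    (hg : ∀ᶠ x in l, g x ≠ 0) (e : ℝ) :
    Tendsto (fun x => f x / g x) l (𝓝 e) ↔ (fun x => f x - e * g x) =o[l] g := by
  rw [isLittleO_iff_tendsto' (hg.mono fun x hx h => absurd h hx), ← tendsto_sub_nhds_zero_iff]
  refine tendsto_congr' (hg.mono fun x hx => ?_)
  field_simp

lemma tendsto_tailDist_posMod_div_iff (μ : Measure ℝ) (y e : ℝ) :
    Tendsto (fun x => tailDist (posMod μ) (x - y) / tailDist (posMod μ) x) atTop (𝓝 e) ↔
      Tendsto (fun x => tailDist μ (x - y) / tailDist μ x) atTop (𝓝 e) := by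
  refine tendsto_congr' ((eventually_ge_atTop (max 0 y)).mono fun x hx => ?_)
  dsimp only
  rw [tailDist_posMod μ (by linarith [le_max_right 0 y, le_max_left 0 y]),
    tailDist_posMod μ ((le_max_left 0 y).trans hx)]

instance (μ : Measure ℝ) [IsFiniteMeasure μ] (c : ℝ) : IsFiniteMeasure (ENNReal.ofReal c • μ) :=
  μ.smul_finite ENNReal.ofReal_ne_top

lemma mix_le_smul_mix {ι : Type*} [Fintype ι] (V : ι → Measure ℝ) {p q : ι → ℝ} (hp : 0 ≤ p)
    (hq : ∀ i, 0 < q i) :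
    ∑ i, ENNReal.ofReal (p i) • V i ≤
      ENNReal.ofReal (∑ j, p j / q j) • ∑ i, ENNReal.ofReal (q i) • V i := by
  refine Measure.le_iff'.2 fun s => ?_
  simp only [Measure.smul_apply, Measure.finsetSum_apply, smul_eq_mul, Finset.mul_sum,
    ← mul_assoc, ← ENNReal.ofReal_mul (Finset.sum_nonneg fun j _ => div_nonneg (hp j) (hq j).le)]
  refine Finset.sum_le_sum fun i _ => mul_le_mul_left (ENNReal.ofReal_le_ofReal ?_) _
  calc p i = p i / q i * q i := (div_mul_cancel₀ _ (hq i).ne').symm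
    _ ≤ (∑ j, p j / q j) * q i := by
      gcongr
      · exact (hq i).le
      exact Finset.single_le_sum (fun j _ => div_nonneg (hp j) (hq j).le) (Finset.mem_univ i)

lemma inv_card_mem_openSimplex {ι : Type*} [Fintype ι] (hι : 1 < Fintype.card ι) :
    (∀ _i : ι, 0 < (Fintype.card ι : ℝ)⁻¹ ∧ (Fintype.card ι : ℝ)⁻¹ < 1) ∧
      ∑ _i : ι, (Fintype.card ι : ℝ)⁻¹ = 1 := by
  have hN : (1 : ℝ) < Fintype.card ι := by exact_mod_cast hι
  refine ⟨fun _ => ⟨by positivity, inv_lt_one_of_one_lt₀ hN⟩, ?_⟩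
  simp only [Finset.sum_const, Finset.card_univ, nsmul_eq_mul]
  exact mul_inv_cancel₀ (by positivity)

section Mixture

variable {ι : Type*} [Fintype ι] (V : ι → Measure ℝ) [∀ i, IsFiniteMeasure (V i)]

lemma tailDist_mix {p : ι → ℝ} (hp : 0 ≤ p) (x : ℝ) :
    tailDist (∑ i, ENNReal.ofReal (p i) • V i) x = ∑ i, p i * tailDist (V i) x := by
  rw [tailDist, Measure.finsetSum_apply, ENNReal.toReal_sum fun i _ => measure_ne_top _ _]
  simp only [Measure.smul_apply, smul_eq_mul, ENNReal.toReal_mul, ENNReal.toReal_ofReal (hp _)]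
  rfl

lemma tailDist_mix_sub (p : ι → ℝ) (hp : 0 ≤ p) (e y x : ℝ) :
    tailDist (∑ i, ENNReal.ofReal (p i) • V i) (x - y) -
        e * tailDist (∑ i, ENNReal.ofReal (p i) • V i) x =
      ∑ i, p i * (tailDist (V i) (x - y) - e * tailDist (V i) x) := by
  rw [tailDist_mix V hp, tailDist_mix V hp, Finset.mul_sum, ← Finset.sum_sub_distrib]
  exact Finset.sum_congr rfl fun i _ => by ring

lemma isBigO_tailDist_mix {p : ι → ℝ} (hp : ∀ i, 0 < p i) (j : ι) :
    tailDist (V j) =O[atTop] tailDist (∑ i, ENNReal.ofReal (p i) • V i) := by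
  refine isBigO_of_le' (c := (p j)⁻¹) _ fun x => ?_
  rw [Real.norm_of_nonneg (tailDist_nonneg _), Real.norm_of_nonneg (tailDist_nonneg _),
    le_inv_mul_iff₀ (hp j), tailDist_mix V fun i => (hp i).le]
  exact Finset.single_le_sum (f := fun i => p i * tailDist (V i) x)
    (fun i _ => mul_nonneg (hp i).le (tailDist_nonneg _)) (Finset.mem_univ j)

lemma isLittleO_mix_tailDist_sub {α : ℝ} {p : ι → ℝ} (hp₀ : 0 ≤ p) (hp₁ : p ≤ 1)
    (h : MemCE α (∑ i, ENNReal.ofReal (p i) • V i)) (y : ℝ) :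
    (fun x => ∑ i, p i * (tailDist (V i) (x - y) - rexp (α * y) * tailDist (V i) x))
      =o[atTop] fun x => ∑ j, tailDist (V j) x := by
  obtain ⟨hpos, hL, -, -⟩ := h
  have hF : ∀ᶠ x in atTop, tailDist (∑ i, ENNReal.ofReal (p i) • V i) x ≠ 0 :=
    (eventually_ge_atTop 0).mono fun x hx => (tailDist_posMod _ hx ▸ hpos x).ne'
  have hFS : tailDist (∑ i, ENNReal.ofReal (p i) • V i) =O[atTop]
      fun x => ∑ j, tailDist (V j) x := by
    refine isBigO_of_le _ fun x => ?_
    rw [Real.norm_of_nonneg (tailDist_nonneg _),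
      Real.norm_of_nonneg (Finset.sum_nonneg fun j _ => tailDist_nonneg _), tailDist_mix V hp₀]
    exact Finset.sum_le_sum fun j _ => mul_le_of_le_one_left (tailDist_nonneg _) (hp₁ j)
  exact (((tendsto_div_iff_isLittleO_sub_mul hF _).1
    ((tendsto_tailDist_posMod_div_iff _ y _).1 (hL y))).trans_isBigO hFS).congr_left
    (tailDist_mix_sub V p hp₀ _ y)

lemma isLittleO_tailDist_sub_of_forall_memCE {α : ℝ} (hι : 1 < Fintype.card ι)
    (H : ∀ p : ι → ℝ, (∀ i, 0 < p i ∧ p i < 1) → ∑ i, p i = 1 →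
      MemCE α (∑ i, ENNReal.ofReal (p i) • V i)) (y : ℝ) (i : ι) :
    (fun x => tailDist (V i) (x - y) - rexp (α * y) * tailDist (V i) x)
      =o[atTop] fun x => ∑ j, tailDist (V j) x := by
  classical
  obtain ⟨hu, hu_sum⟩ := inv_card_mem_openSimplex hι
  set u : ι → ℝ := fun _ => (Fintype.card ι : ℝ)⁻¹
  -- the midpoint of the barycentre `u` and the vertex `i` of the simplex
  set w : ι → ℝ := fun j => (u j + if j = i then 1 else 0) / 2
  have hw : ∀ j, 0 < w j ∧ w j < 1 := by
    intro j
    have := hu j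
    simp only [w, u]
    split_ifs <;> constructor <;> linarith
  have hw_sum : ∑ j, w j = 1 := by
    simp only [w, ← Finset.sum_div, Finset.sum_add_distrib, Finset.sum_ite_eq', Finset.mem_univ,
      if_true, hu_sum]
    norm_num
  have hmix (p : ι → ℝ) (hp : ∀ j, 0 < p j ∧ p j < 1) (hp_sum : ∑ j, p j = 1) :=
    isLittleO_mix_tailDist_sub V (fun j => (hp j).1.le) (fun j => (hp j).2.le) (H p hp hp_sum) y
  refine (((hmix w hw hw_sum).const_mul_left 2).sub (hmix u hu hu_sum)).congr_left fun x => ?_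
  simp only [w, u, add_div, add_mul, Finset.sum_add_distrib, ite_div, ite_mul, zero_div, zero_mul,
    Finset.sum_ite_eq', Finset.mem_univ, if_true, div_mul_eq_mul_div, ← Finset.sum_div]
  ring

lemma memCE_mix_of_isLittleO {α : ℝ} {p q : ι → ℝ} (hp : ∀ i, 0 < p i) (hq : ∀ i, 0 < q i)
    (hq_mem : MemCE α (∑ i, ENNReal.ofReal (q i) • V i))
    (hV : ∀ y i, (fun x => tailDist (V i) (x - y) - rexp (α * y) * tailDist (V i) x)
      =o[atTop] fun x => ∑ j, tailDist (V j) x) :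
    MemCE α (∑ i, ENNReal.ofReal (p i) • V i) := by
  have hqp := mix_le_smul_mix V (fun i => (hq i).le) hp
  refine hq_mem.of_le_smul ENNReal.ofReal_ne_top ENNReal.ofReal_ne_top
    (mix_le_smul_mix V (fun i => (hp i).le) hq) hqp fun y => ?_
  have hF : ∀ᶠ x in atTop, tailDist (∑ i, ENNReal.ofReal (p i) • V i) x ≠ 0 :=
    (eventually_ge_atTop 0).mono fun x hx =>
      (tailDist_pos_of_le_smul ENNReal.ofReal_ne_top hqp (tailDist_posMod _ hx ▸ hq_mem.1 x)).ne'
  rw [tendsto_tailDist_posMod_div_iff, tendsto_div_iff_isLittleO_sub_mul hF]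
  have hS : (fun x => ∑ j, tailDist (V j) x) =O[atTop]
      tailDist (∑ i, ENNReal.ofReal (p i) • V i) :=
    IsBigO.fun_sum fun j _ => isBigO_tailDist_mix V hp j
  exact ((IsLittleO.fun_sum fun i _ => (hV y i).const_mul_left (p i)).trans_isBigO hS).congr_left
    fun x => (tailDist_mix_sub V p (fun i => (hp i).le) _ y x).symm

end Mixture

theorem stmt_9_general
    (n : ℕ) (hn : 2 ≤ n)
    (V : Fin n → Measure ℝ) [∀ i, IsProbabilityMeasure (V i)]
    (α : ℝ) :
    (∀ p : Fin n → ℝ, (∀ i, 0 < p i ∧ p i < 1) → ∑ i, p i = 1 →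
        MemCE α (∑ i, ENNReal.ofReal (p i) • V i)) ↔
      ((∃ p : Fin n → ℝ, (∀ i, 0 < p i ∧ p i < 1) ∧ ∑ i, p i = 1 ∧
          MemCE α (∑ i, ENNReal.ofReal (p i) • V i)) ∧
        ∀ y : ℝ, ∀ i : Fin n,
          (fun x => tailDist (V i) (x - y) - Real.exp (α * y) * tailDist (V i) x)
            =o[atTop] (fun x => ∑ j, tailDist (V j) x)) := by
  have hn' : 1 < Fintype.card (Fin n) := by rw [Fintype.card_fin]; omega
  obtain ⟨hu, hu_sum⟩ := inv_card_mem_openSimplex hn'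
  constructor
  · intro H
    exact ⟨⟨_, hu, hu_sum, H _ hu hu_sum⟩,
      isLittleO_tailDist_sub_of_forall_memCE V hn' H⟩
  · rintro ⟨⟨q, hq, -, hq_mem⟩, hV⟩ p hp -
    exact memCE_mix_of_isLittleO V (fun i => (hp i).1) (fun i => (hq i).1) hq_mem hV

/-- Lemma 3.2: equivalence between membership of every convex combination in `S(α)` and
membership of some convex combination plus the insensitivity relation
`V̄ᵢ(x-y) - e^{αy} V̄ᵢ(x) = o(Σⱼ V̄ⱼ(x))`. -/
theorem stmt_9
    (n : ℕ) (hn : 2 ≤ n)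
    (V : Fin n → Measure ℝ) [∀ i, IsProbabilityMeasure (V i)]
    (α : ℝ) (hα : 0 ≤ α) :
    (∀ p : Fin n → ℝ, (∀ i, 0 < p i ∧ p i < 1) → ∑ i, p i = 1 →
        MemCE α (∑ i, ENNReal.ofReal (p i) • V i)) ↔
      ((∃ p : Fin n → ℝ, (∀ i, 0 < p i ∧ p i < 1) ∧ ∑ i, p i = 1 ∧
          MemCE α (∑ i, ENNReal.ofReal (p i) • V i)) ∧
        ∀ y : ℝ, ∀ i : Fin n,
          (fun x => tailDist (V i) (x - y) - Real.exp (α * y) * tailDist (V i) x)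
            =o[atTop] (fun x => ∑ j, tailDist (V j) x)) :=
  stmt_9_general n hn V α
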